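/- arXiv:0904.3453 — 2 statements merged into one kernel-verified Lean document; each statement's English description precedes it below -/
import Mathlib

section
/- Let $q,a,b,d$ be complex numbers with all relevant denominators nonzero, and define $B_k = \frac{(b; q^2)_k\,(d; q^2)_k}{(q^3a/b; q^3)_k\,(q^3a/d; q^3)_k} \cdot \frac{(b^2d^2/q^6a; q^3)_k\,(q^{12}a^3/b^3d^3; q^3)_k}{(q^9a^2/b^2d^2; q^2)_k\,(b^3d^3/q^9a^2; q^2)_k}$ for $k \ge 0$. Then for every $k \ge 0$, the forward difference satisfies $B_{k+1} - B_k = -\frac{(1-q^{3+5k}a)(1-q^{3+k}a/bd)(1-q^9a^2/b^2d^3)(1-q^9a^2/b^3d^2)}{(1-q^3a/b)(1-q^3a/d)(1-q^9a^2/b^2d^2)(1-q^9a^2/b^3d^3)} \cdot \frac{(b; q^2)_k\,(d; q^2)_k}{(q^{11}a^2/b^2d^2; q^2)_k\,(b^3d^3/q^7a^2; q^2)_k} \cdot \frac{(b^2d^2/q^6a; q^3)_k\,(q^{12}a^3/b^3d^3; q^3)_k}{(q^6a/b; q^3)_k\,(q^6a/d; q^3)_k}\, q^{2k}$. -/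
/-! `B_{k+1} / B_k = N(t) / D(t)` is a rational function of `t = q^k`, so
`B_{k+1} - B_k = B_k (N - D) / D`, and `N - D` factors as `(b³d³/q⁹a²) t²` times the four linear
factors in the numerator of the prefactor. Replacing each denominator parameter `y` of `B_k`
(of base `p`) by `y p` turns `B_k / D(t)` into the product on the right-hand side divided by
`(1 - q³a/b)(1 - q³a/d)(1 - q⁹a²/b²d²)(1 - b³d³/q⁹a²)`, and the last factor equals
`-(b³d³/q⁹a²)(1 - q⁹a²/b³d³)`. -/

/-- The finite `q`-shifted factorial `(x; p)_k`. -/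
noncomputable def qp (x p : ℂ) (k : ℕ) : ℂ := ∏ j ∈ Finset.range k, (1 - x * p ^ j)

theorem one_sub_eq_neg_mul_one_sub_inv {K : Type*} [Field K] {x : K} (hx : x ≠ 0) :
    1 - x = -x * (1 - x⁻¹) := by
  field_simp; ring

theorem qp_succ (x p : ℂ) (k : ℕ) : qp x p (k + 1) = qp x p k * (1 - x * p ^ k) :=
  Finset.prod_range_succ _ _

theorem one_sub_mul_pow_ne_zero_of_qp_succ {x p : ℂ} {k : ℕ} (h : qp x p (k + 1) ≠ 0) :
    1 - x * p ^ k ≠ 0 :=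
  right_ne_zero_of_mul (qp_succ x p k ▸ h)

theorem qp_mul_base (x p : ℂ) (k : ℕ) :
    qp (x * p) p k * (1 - x) = qp x p k * (1 - x * p ^ k) := by
  rw [← qp_succ]
  unfold qp
  rw [Finset.prod_range_succ']
  simp only [pow_succ', pow_zero, mul_one, mul_assoc]

theorem qp_mul_base_eq {x : ℂ} (p : ℂ) (k : ℕ) (hx : 1 - x ≠ 0) :
    qp (x * p) p k = qp x p k * (1 - x * p ^ k) / (1 - x) := by
  rw [eq_div_iff hx, qp_mul_base]

section

variable (q a b d : ℂ)

noncomputable def bTerm (j : ℕ) : ℂ :=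
  qp b (q ^ 2) j * qp d (q ^ 2) j
      / (qp (q ^ 3 * a / b) (q ^ 3) j * qp (q ^ 3 * a / d) (q ^ 3) j)
    * (qp (b ^ 2 * d ^ 2 / (q ^ 6 * a)) (q ^ 3) j
        * qp (q ^ 12 * a ^ 3 / (b ^ 3 * d ^ 3)) (q ^ 3) j
      / (qp (q ^ 9 * a ^ 2 / (b ^ 2 * d ^ 2)) (q ^ 2) j
          * qp (b ^ 3 * d ^ 3 / (q ^ 9 * a ^ 2)) (q ^ 2) j))

noncomputable def bRatioNum (t : ℂ) : ℂ :=
  (1 - b * t ^ 2) * (1 - d * t ^ 2) * (1 - b ^ 2 * d ^ 2 / (q ^ 6 * a) * t ^ 3)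
    * (1 - q ^ 12 * a ^ 3 / (b ^ 3 * d ^ 3) * t ^ 3)

noncomputable def bRatioDen (t : ℂ) : ℂ :=
  (1 - q ^ 3 * a / b * t ^ 3) * (1 - q ^ 3 * a / d * t ^ 3)
    * (1 - q ^ 9 * a ^ 2 / (b ^ 2 * d ^ 2) * t ^ 2)
    * (1 - b ^ 3 * d ^ 3 / (q ^ 9 * a ^ 2) * t ^ 2)

theorem bTerm_succ (k : ℕ) :
    bTerm q a b d (k + 1)
      = bTerm q a b d k * (bRatioNum q a b d (q ^ k) / bRatioDen q a b d (q ^ k)) := by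
  simp only [bTerm, bRatioNum, bRatioDen, qp_succ, ← pow_mul, mul_comm _ k, div_eq_mul_inv,
    mul_inv]
  ring

theorem bRatioNum_sub_bRatioDen (t : ℂ) (hq : q ≠ 0) (ha : a ≠ 0) (hb : b ≠ 0) (hd : d ≠ 0) :
    bRatioNum q a b d t - bRatioDen q a b d t
      = b ^ 3 * d ^ 3 / (q ^ 9 * a ^ 2)
          * ((1 - q ^ 3 * t ^ 5 * a) * (1 - q ^ 3 * t * a / (b * d))
            * (1 - q ^ 9 * a ^ 2 / (b ^ 2 * d ^ 3)) * (1 - q ^ 9 * a ^ 2 / (b ^ 3 * d ^ 2)))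
          * t ^ 2 := by
  unfold bRatioNum bRatioDen
  field_simp
  ring

theorem bRatioDen_ne_zero (k : ℕ)
    (hA : qp (q ^ 3 * a / b) (q ^ 3) (k + 1) ≠ 0) (hC : qp (q ^ 3 * a / d) (q ^ 3) (k + 1) ≠ 0)
    (hX : qp (q ^ 9 * a ^ 2 / (b ^ 2 * d ^ 2)) (q ^ 2) (k + 1) ≠ 0)
    (hY : qp (b ^ 3 * d ^ 3 / (q ^ 9 * a ^ 2)) (q ^ 2) (k + 1) ≠ 0) :
    bRatioDen q a b d (q ^ k) ≠ 0 := by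
  rw [bRatioDen, pow_right_comm q k 3, pow_right_comm q k 2]
  exact mul_ne_zero (mul_ne_zero (mul_ne_zero (one_sub_mul_pow_ne_zero_of_qp_succ hA)
    (one_sub_mul_pow_ne_zero_of_qp_succ hC)) (one_sub_mul_pow_ne_zero_of_qp_succ hX))
    (one_sub_mul_pow_ne_zero_of_qp_succ hY)

theorem prod_shiftedDen_eq (k : ℕ) (hq : q ≠ 0) (hA : 1 - q ^ 3 * a / b ≠ 0)
    (hC : 1 - q ^ 3 * a / d ≠ 0) (hX : 1 - q ^ 9 * a ^ 2 / (b ^ 2 * d ^ 2) ≠ 0)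
    (hY : 1 - b ^ 3 * d ^ 3 / (q ^ 9 * a ^ 2) ≠ 0) :
    qp b (q ^ 2) k * qp d (q ^ 2) k
        / (qp (q ^ 11 * a ^ 2 / (b ^ 2 * d ^ 2)) (q ^ 2) k
            * qp (b ^ 3 * d ^ 3 / (q ^ 7 * a ^ 2)) (q ^ 2) k)
      * (qp (b ^ 2 * d ^ 2 / (q ^ 6 * a)) (q ^ 3) k
          * qp (q ^ 12 * a ^ 3 / (b ^ 3 * d ^ 3)) (q ^ 3) k
        / (qp (q ^ 6 * a / b) (q ^ 3) k * qp (q ^ 6 * a / d) (q ^ 3) k))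
    = bTerm q a b d k * ((1 - q ^ 3 * a / b) * (1 - q ^ 3 * a / d)
        * (1 - q ^ 9 * a ^ 2 / (b ^ 2 * d ^ 2)) * (1 - b ^ 3 * d ^ 3 / (q ^ 9 * a ^ 2)))
      / bRatioDen q a b d (q ^ k) := by
  rw [show q ^ 11 * a ^ 2 / (b ^ 2 * d ^ 2) = q ^ 9 * a ^ 2 / (b ^ 2 * d ^ 2) * q ^ 2 by ring,
    show b ^ 3 * d ^ 3 / (q ^ 7 * a ^ 2) = b ^ 3 * d ^ 3 / (q ^ 9 * a ^ 2) * q ^ 2 by field_simp,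
    show q ^ 6 * a / b = q ^ 3 * a / b * q ^ 3 by ring,
    show q ^ 6 * a / d = q ^ 3 * a / d * q ^ 3 by ring,
    qp_mul_base_eq _ _ hA, qp_mul_base_eq _ _ hC, qp_mul_base_eq _ _ hX, qp_mul_base_eq _ _ hY]
  simp only [bTerm, bRatioDen, ← pow_mul, mul_comm k, div_eq_mul_inv, mul_inv, inv_inv]
  ring

end

/-- Forward difference of the sequence `B` from Section 2.1. -/
theorem forward_difference_B_section21 (q a b d : ℂ)
    (hq : q ≠ 0) (ha : a ≠ 0) (hb : b ≠ 0) (hd : d ≠ 0)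
    (hden : ∀ k : ℕ,
      qp (q ^ 3 * a / b) (q ^ 3) k ≠ 0 ∧ qp (q ^ 3 * a / d) (q ^ 3) k ≠ 0 ∧
      qp (q ^ 9 * a ^ 2 / (b ^ 2 * d ^ 2)) (q ^ 2) k ≠ 0 ∧
      qp (b ^ 3 * d ^ 3 / (q ^ 9 * a ^ 2)) (q ^ 2) k ≠ 0 ∧
      qp (q ^ 11 * a ^ 2 / (b ^ 2 * d ^ 2)) (q ^ 2) k ≠ 0 ∧
      qp (b ^ 3 * d ^ 3 / (q ^ 7 * a ^ 2)) (q ^ 2) k ≠ 0 ∧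
      qp (q ^ 6 * a / b) (q ^ 3) k ≠ 0 ∧ qp (q ^ 6 * a / d) (q ^ 3) k ≠ 0)
    (hlin : (1 - q ^ 3 * a / b) ≠ 0 ∧ (1 - q ^ 3 * a / d) ≠ 0 ∧
      (1 - q ^ 9 * a ^ 2 / (b ^ 2 * d ^ 2)) ≠ 0 ∧
      (1 - q ^ 9 * a ^ 2 / (b ^ 3 * d ^ 3)) ≠ 0) :
    ∀ k : ℕ,
      (fun j : ℕ =>
          qp b (q ^ 2) j * qp d (q ^ 2) j
            / (qp (q ^ 3 * a / b) (q ^ 3) j * qp (q ^ 3 * a / d) (q ^ 3) j)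
          * (qp (b ^ 2 * d ^ 2 / (q ^ 6 * a)) (q ^ 3) j
              * qp (q ^ 12 * a ^ 3 / (b ^ 3 * d ^ 3)) (q ^ 3) j
            / (qp (q ^ 9 * a ^ 2 / (b ^ 2 * d ^ 2)) (q ^ 2) j
                * qp (b ^ 3 * d ^ 3 / (q ^ 9 * a ^ 2)) (q ^ 2) j))) (k + 1)
        - (fun j : ℕ =>
          qp b (q ^ 2) j * qp d (q ^ 2) j
            / (qp (q ^ 3 * a / b) (q ^ 3) j * qp (q ^ 3 * a / d) (q ^ 3) j)
          * (qp (b ^ 2 * d ^ 2 / (q ^ 6 * a)) (q ^ 3) j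
              * qp (q ^ 12 * a ^ 3 / (b ^ 3 * d ^ 3)) (q ^ 3) j
            / (qp (q ^ 9 * a ^ 2 / (b ^ 2 * d ^ 2)) (q ^ 2) j
                * qp (b ^ 3 * d ^ 3 / (q ^ 9 * a ^ 2)) (q ^ 2) j))) k =
      -((1 - q ^ (3 + 5 * k) * a) * (1 - q ^ (3 + k) * a / (b * d))
            * (1 - q ^ 9 * a ^ 2 / (b ^ 2 * d ^ 3)) * (1 - q ^ 9 * a ^ 2 / (b ^ 3 * d ^ 2))
          / ((1 - q ^ 3 * a / b) * (1 - q ^ 3 * a / d)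
              * (1 - q ^ 9 * a ^ 2 / (b ^ 2 * d ^ 2))
              * (1 - q ^ 9 * a ^ 2 / (b ^ 3 * d ^ 3))))
        * (qp b (q ^ 2) k * qp d (q ^ 2) k
            / (qp (q ^ 11 * a ^ 2 / (b ^ 2 * d ^ 2)) (q ^ 2) k
                * qp (b ^ 3 * d ^ 3 / (q ^ 7 * a ^ 2)) (q ^ 2) k))
        * (qp (b ^ 2 * d ^ 2 / (q ^ 6 * a)) (q ^ 3) k
            * qp (q ^ 12 * a ^ 3 / (b ^ 3 * d ^ 3)) (q ^ 3) k
          / (qp (q ^ 6 * a / b) (q ^ 3) k * qp (q ^ 6 * a / d) (q ^ 3) k))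
        * q ^ (2 * k) := by
  intro k
  have hY0 : b ^ 3 * d ^ 3 / (q ^ 9 * a ^ 2) ≠ 0 := by simp [*]
  obtain ⟨hA, hC, hX, hYinv⟩ := hlin
  obtain ⟨hA', hC', hX', hY', -⟩ := hden (k + 1)
  have hY : 1 - b ^ 3 * d ^ 3 / (q ^ 9 * a ^ 2)
      = -(b ^ 3 * d ^ 3 / (q ^ 9 * a ^ 2)) * (1 - q ^ 9 * a ^ 2 / (b ^ 3 * d ^ 3)) := by
    rw [one_sub_eq_neg_mul_one_sub_inv hY0, inv_div]
  have hD := bRatioDen_ne_zero q a b d k hA' hC' hX' hY'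
  show bTerm q a b d (k + 1) - bTerm q a b d k = _
  rw [mul_assoc (-_), prod_shiftedDen_eq q a b d k hq hA hC hX
    (by rw [hY]; exact mul_ne_zero (neg_ne_zero.mpr hY0) hYinv),
    bTerm_succ, hY, show q ^ (3 + 5 * k) = q ^ 3 * (q ^ k) ^ 5 by ring,
    show q ^ (3 + k) = q ^ 3 * q ^ k by ring, show q ^ (2 * k) = (q ^ k) ^ 2 by ring]
  -- as atoms, the linear factors can be cancelled by `field_simp`
  generalize 1 - q ^ 3 * a / b = gA at hA ⊢
  generalize 1 - q ^ 3 * a / d = gC at hC ⊢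
  generalize 1 - q ^ 9 * a ^ 2 / (b ^ 2 * d ^ 2) = gX at hX ⊢
  generalize 1 - q ^ 9 * a ^ 2 / (b ^ 3 * d ^ 3) = gY at hYinv ⊢
  field_simp
  rw [bRatioNum_sub_bRatioDen q a b d (q ^ k) hq ha hb hd]
  field_simp
end

section
/- Let $q,a,c,e$ be complex numbers with all relevant denominators nonzero, and define $A_k = \frac{(q^3c^2e^2/a^2; q^2)_k\,(a^4/qc^3e^3; q^2)_k\,(q^4c; q^3)_k\,(q^4e; q^3)_k}{(q^2a^3/c^2e^2; q^3)_k\,(q^6c^3e^3/a^3; q^3)_k\,(qa/c; q^2)_k\,(qa/e; q^2)_k}$ for $k \ge -1$. Then for all $k \ge 0$, $A_k - A_{k-1} = \frac{(1-q^{5k}a)(1-q^{2+k}ce/a)(1-q^2c^2e^3/a^3)(1-q^2c^3e^2/a^3)}{(1-qc)(1-qe)(1-qc^2e^2/a^2)(1-q^3c^3e^3/a^4)} \cdot \frac{(qc^2e^2/a^2; q^2)_k\,(a^4/q^3c^3e^3; q^2)_k}{(qa/c; q^2)_k\,(qa/e; q^2)_k} \cdot \frac{(qc; q^3)_k\,(qe;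 q^3)_k}{(q^2a^3/c^2e^2; q^3)_k\,(q^6c^3e^3/a^3; q^3)_k}\, q^{2k}$. -/
/-- The `q`-shifted factorial with integer index: `(x;p)_k` for `k ≥ 0` and
`(x;p)_{-1} = (1 - x/p)⁻¹` for negative index. -/
noncomputable def qpz (x p : ℂ) (k : ℤ) : ℂ :=
  if 0 ≤ k then ∏ j ∈ Finset.range k.toNat, (1 - x * p ^ j) else (1 - x / p)⁻¹

noncomputable def seqA (q a c e : ℂ) (j : ℤ) : ℂ :=
  qpz (q ^ 3 * c ^ 2 * e ^ 2 / a ^ 2) (q ^ 2) j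
    * qpz (a ^ 4 / (q * c ^ 3 * e ^ 3)) (q ^ 2) j
    * qpz (q ^ 4 * c) (q ^ 3) j * qpz (q ^ 4 * e) (q ^ 3) j
  / (qpz (q ^ 2 * a ^ 3 / (c ^ 2 * e ^ 2)) (q ^ 3) j
      * qpz (q ^ 6 * c ^ 3 * e ^ 3 / a ^ 3) (q ^ 3) j
      * qpz (q * a / c) (q ^ 2) j * qpz (q * a / e) (q ^ 2) j)

noncomputable def ratioNum (q a c e t : ℂ) : ℂ :=
  (1 - q ^ 3 * c ^ 2 * e ^ 2 / a ^ 2 * t ^ 2 / q ^ 2)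
    * (1 - a ^ 4 / (q * c ^ 3 * e ^ 3) * t ^ 2 / q ^ 2)
    * (1 - q ^ 4 * c * t ^ 3 / q ^ 3) * (1 - q ^ 4 * e * t ^ 3 / q ^ 3)

noncomputable def ratioDen (q a c e t : ℂ) : ℂ :=
  (1 - q ^ 2 * a ^ 3 / (c ^ 2 * e ^ 2) * t ^ 3 / q ^ 3)
    * (1 - q ^ 6 * c ^ 3 * e ^ 3 / a ^ 3 * t ^ 3 / q ^ 3)
    * (1 - q * a / c * t ^ 2 / q ^ 2) * (1 - q * a / e * t ^ 2 / q ^ 2)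

lemma qpz_natCast (x p : ℂ) (n : ℕ) : qpz x p n = qp x p n := by
  simp [qpz, qp]

lemma qpz_neg_one_ne_zero_iff {x p : ℂ} : qpz x p (-1) ≠ 0 ↔ 1 - x / p ≠ 0 := by
  simp [qpz]

lemma qpz_natCast_eq_mul {x p : ℂ} (hp : p ≠ 0) (hx : 1 - x / p ≠ 0) (n : ℕ) :
    qpz x p n = qpz x p (n - 1) * (1 - x * p ^ n / p) := by
  cases n with
  | zero => simp [qpz, hx]
  | succ n =>
    rw [Nat.cast_succ, add_sub_cancel_right, ← Nat.cast_succ, qpz_natCast, qpz_natCast, pow_succ,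
      ← mul_assoc, mul_div_cancel_right₀ _ hp, qp, qp, Finset.prod_range_succ]

lemma one_sub_mul_pow_div_ne_zero {x p : ℂ} (hp : p ≠ 0) (hx : 1 - x / p ≠ 0) {n : ℕ}
    (h : qpz x p n ≠ 0) : 1 - x * p ^ n / p ≠ 0 :=
  right_ne_zero_of_mul (qpz_natCast_eq_mul hp hx n ▸ h)

lemma qp_eq_one_sub_mul_qpz {x y p : ℂ} (hp : p ≠ 0) (hxy : x * p = y) (hx : 1 - x ≠ 0)
    (n : ℕ) : qp x p n = (1 - x) * qpz y p (n - 1) := by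
  subst hxy
  cases n with
  | zero => simp [qpz, qp, hp, hx]
  | succ n =>
    rw [Nat.cast_succ, add_sub_cancel_right, qpz_natCast, qp, Finset.prod_range_succ', qp,
      mul_comm]
    simp only [pow_zero, mul_one, pow_succ', mul_assoc]

lemma mul_div_sub_self_eq {K : Type*} [Field K] {A U V L R C T : K} (hV : V ≠ 0) (hL : L ≠ 0)
    (h : (U - V) * L = R * C * T) : A * (U / V) - A = R / L * (C * A / V) * T := by
  field_simp
  linear_combination A * h

lemma seqA_natCast_eq_mul {q a c e : ℂ} (hq : q ≠ 0)
    (hnum : (1 - (q ^ 3 * c ^ 2 * e ^ 2 / a ^ 2) / q ^ 2) ≠ 0 ∧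
      (1 - (a ^ 4 / (q * c ^ 3 * e ^ 3)) / q ^ 2) ≠ 0 ∧
      (1 - (q ^ 4 * c) / q ^ 3) ≠ 0 ∧ (1 - (q ^ 4 * e) / q ^ 3) ≠ 0)
    (hden : qpz (q ^ 2 * a ^ 3 / (c ^ 2 * e ^ 2)) (q ^ 3) (-1) ≠ 0 ∧
      qpz (q ^ 6 * c ^ 3 * e ^ 3 / a ^ 3) (q ^ 3) (-1) ≠ 0 ∧
      qpz (q * a / c) (q ^ 2) (-1) ≠ 0 ∧ qpz (q * a / e) (q ^ 2) (-1) ≠ 0)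
    (k : ℕ) :
    seqA q a c e k =
      seqA q a c e (k - 1) * (ratioNum q a c e (q ^ k) / ratioDen q a c e (q ^ k)) := by
  obtain ⟨hn1, hn2, hn3, hn4⟩ := hnum
  simp only [qpz_neg_one_ne_zero_iff] at hden
  obtain ⟨hd1, hd2, hd3, hd4⟩ := hden
  have hq2 : q ^ 2 ≠ 0 := pow_ne_zero 2 hq
  have hq3 : q ^ 3 ≠ 0 := pow_ne_zero 3 hq
  rw [seqA, qpz_natCast_eq_mul hq2 hn1, qpz_natCast_eq_mul hq2 hn2, qpz_natCast_eq_mul hq3 hn3,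
    qpz_natCast_eq_mul hq3 hn4, qpz_natCast_eq_mul hq3 hd1, qpz_natCast_eq_mul hq3 hd2,
    qpz_natCast_eq_mul hq2 hd3, qpz_natCast_eq_mul hq2 hd4,
    pow_right_comm q 2 k, pow_right_comm q 3 k, seqA, ratioNum, ratioDen]
  simp only [div_eq_mul_inv, mul_inv]
  ring

lemma ratioDen_ne_zero {q a c e : ℂ} (hq : q ≠ 0)
    (hden : qpz (q ^ 2 * a ^ 3 / (c ^ 2 * e ^ 2)) (q ^ 3) (-1) ≠ 0 ∧
      qpz (q ^ 6 * c ^ 3 * e ^ 3 / a ^ 3) (q ^ 3) (-1) ≠ 0 ∧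
      qpz (q * a / c) (q ^ 2) (-1) ≠ 0 ∧ qpz (q * a / e) (q ^ 2) (-1) ≠ 0)
    {k : ℕ} (hk : qpz (q ^ 2 * a ^ 3 / (c ^ 2 * e ^ 2)) (q ^ 3) k ≠ 0 ∧
      qpz (q ^ 6 * c ^ 3 * e ^ 3 / a ^ 3) (q ^ 3) k ≠ 0 ∧
      qpz (q * a / c) (q ^ 2) k ≠ 0 ∧ qpz (q * a / e) (q ^ 2) k ≠ 0) :
    ratioDen q a c e (q ^ k) ≠ 0 := by
  simp only [qpz_neg_one_ne_zero_iff] at hden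
  obtain ⟨hd1, hd2, hd3, hd4⟩ := hden
  obtain ⟨hk1, hk2, hk3, hk4⟩ := hk
  have hq2 : q ^ 2 ≠ 0 := pow_ne_zero 2 hq
  have hq3 : q ^ 3 ≠ 0 := pow_ne_zero 3 hq
  rw [ratioDen, ← pow_right_comm q 2 k, ← pow_right_comm q 3 k]
  refine mul_ne_zero (mul_ne_zero (mul_ne_zero ?_ ?_) ?_) ?_
  · exact one_sub_mul_pow_div_ne_zero hq3 hd1 hk1
  · exact one_sub_mul_pow_div_ne_zero hq3 hd2 hk2
  · exact one_sub_mul_pow_div_ne_zero hq2 hd3 hk3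
  · exact one_sub_mul_pow_div_ne_zero hq2 hd4 hk4

lemma key_identity {q a c e : ℂ} (hq : q ≠ 0) (ha : a ≠ 0) (hc : c ≠ 0) (he : e ≠ 0) (t : ℂ) :
    (ratioNum q a c e t - ratioDen q a c e t)
        * ((1 - q * c) * (1 - q * e) * (1 - q * c ^ 2 * e ^ 2 / a ^ 2)
          * (1 - q ^ 3 * c ^ 3 * e ^ 3 / a ^ 4))
      = (1 - t ^ 5 * a) * (1 - q ^ 2 * t * c * e / a) * (1 - q ^ 2 * c ^ 2 * e ^ 3 / a ^ 3)
          * (1 - q ^ 2 * c ^ 3 * e ^ 2 / a ^ 3)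
        * ((1 - q * c ^ 2 * e ^ 2 / a ^ 2) * (1 - a ^ 4 / (q ^ 3 * c ^ 3 * e ^ 3))
          * (1 - q * c) * (1 - q * e)) * t ^ 2 := by
  rw [ratioNum, ratioDen]
  field_simp
  ring

/-- Backward difference of the sequence `A` from Section 3.1. -/
theorem backward_difference_A_section31 (q a c e : ℂ)
    (hq : q ≠ 0) (ha : a ≠ 0) (hc : c ≠ 0) (he : e ≠ 0)
    (hnum : (1 - (q ^ 3 * c ^ 2 * e ^ 2 / a ^ 2) / q ^ 2) ≠ 0 ∧
      (1 - (a ^ 4 / (q * c ^ 3 * e ^ 3)) / q ^ 2) ≠ 0 ∧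
      (1 - (q ^ 4 * c) / q ^ 3) ≠ 0 ∧ (1 - (q ^ 4 * e) / q ^ 3) ≠ 0)
    (hden : ∀ k : ℤ, -1 ≤ k →
      qpz (q ^ 2 * a ^ 3 / (c ^ 2 * e ^ 2)) (q ^ 3) k ≠ 0 ∧
      qpz (q ^ 6 * c ^ 3 * e ^ 3 / a ^ 3) (q ^ 3) k ≠ 0 ∧
      qpz (q * a / c) (q ^ 2) k ≠ 0 ∧ qpz (q * a / e) (q ^ 2) k ≠ 0)
    (hlin : (1 - q * c) ≠ 0 ∧ (1 - q * e) ≠ 0 ∧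
      (1 - q * c ^ 2 * e ^ 2 / a ^ 2) ≠ 0 ∧ (1 - q ^ 3 * c ^ 3 * e ^ 3 / a ^ 4) ≠ 0) :
    ∀ k : ℕ,
      (fun j : ℤ =>
          qpz (q ^ 3 * c ^ 2 * e ^ 2 / a ^ 2) (q ^ 2) j
            * qpz (a ^ 4 / (q * c ^ 3 * e ^ 3)) (q ^ 2) j
            * qpz (q ^ 4 * c) (q ^ 3) j * qpz (q ^ 4 * e) (q ^ 3) j
          / (qpz (q ^ 2 * a ^ 3 / (c ^ 2 * e ^ 2)) (q ^ 3) j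
              * qpz (q ^ 6 * c ^ 3 * e ^ 3 / a ^ 3) (q ^ 3) j
              * qpz (q * a / c) (q ^ 2) j * qpz (q * a / e) (q ^ 2) j)) (k : ℤ)
        - (fun j : ℤ =>
          qpz (q ^ 3 * c ^ 2 * e ^ 2 / a ^ 2) (q ^ 2) j
            * qpz (a ^ 4 / (q * c ^ 3 * e ^ 3)) (q ^ 2) j
            * qpz (q ^ 4 * c) (q ^ 3) j * qpz (q ^ 4 * e) (q ^ 3) j
          / (qpz (q ^ 2 * a ^ 3 / (c ^ 2 * e ^ 2)) (q ^ 3) j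
              * qpz (q ^ 6 * c ^ 3 * e ^ 3 / a ^ 3) (q ^ 3) j
              * qpz (q * a / c) (q ^ 2) j * qpz (q * a / e) (q ^ 2) j)) ((k : ℤ) - 1) =
      (1 - q ^ (5 * k) * a) * (1 - q ^ (2 + k) * c * e / a)
          * (1 - q ^ 2 * c ^ 2 * e ^ 3 / a ^ 3) * (1 - q ^ 2 * c ^ 3 * e ^ 2 / a ^ 3)
        / ((1 - q * c) * (1 - q * e) * (1 - q * c ^ 2 * e ^ 2 / a ^ 2)
            * (1 - q ^ 3 * c ^ 3 * e ^ 3 / a ^ 4))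
        * (qp (q * c ^ 2 * e ^ 2 / a ^ 2) (q ^ 2) k
            * qp (a ^ 4 / (q ^ 3 * c ^ 3 * e ^ 3)) (q ^ 2) k
          / (qp (q * a / c) (q ^ 2) k * qp (q * a / e) (q ^ 2) k))
        * (qp (q * c) (q ^ 3) k * qp (q * e) (q ^ 3) k
          / (qp (q ^ 2 * a ^ 3 / (c ^ 2 * e ^ 2)) (q ^ 3) k
              * qp (q ^ 6 * c ^ 3 * e ^ 3 / a ^ 3) (q ^ 3) k))
        * q ^ (2 * k) := by
  intro k
  obtain ⟨hl1, hl2, hl3, hl4⟩ := hlin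
  have hd := hden (-1) le_rfl
  simp only [qpz_neg_one_ne_zero_iff] at hd
  obtain ⟨hd1, hd2, hd3, hd4⟩ := hd
  have hq2 : q ^ 2 ≠ 0 := pow_ne_zero 2 hq
  have hq3 : q ^ 3 ≠ 0 := pow_ne_zero 3 hq
  have hx : 1 - a ^ 4 / (q ^ 3 * c ^ 3 * e ^ 3) ≠ 0 := by
    convert hnum.2.1 using 2
    field_simp
  show seqA q a c e k - seqA q a c e (k - 1) = _
  rw [seqA_natCast_eq_mul hq hnum (hden (-1) le_rfl),
    mul_div_sub_self_eq (ratioDen_ne_zero hq (hden (-1) le_rfl) (hden k (by omega)))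
      (by simp [hl1, hl2, hl3, hl4]) (key_identity hq ha hc he (q ^ k))]
  rw [qp_eq_one_sub_mul_qpz hq2 (y := q ^ 3 * c ^ 2 * e ^ 2 / a ^ 2) (by ring) hl3,
    qp_eq_one_sub_mul_qpz hq2 (y := a ^ 4 / (q * c ^ 3 * e ^ 3)) (by field_simp) hx,
    qp_eq_one_sub_mul_qpz hq3 (y := q ^ 4 * c) (by ring) hl1,
    qp_eq_one_sub_mul_qpz hq3 (y := q ^ 4 * e) (by ring) hl2,
    ← qpz_natCast, ← qpz_natCast, ← qpz_natCast, ← qpz_natCast,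
    qpz_natCast_eq_mul hq3 hd1, qpz_natCast_eq_mul hq3 hd2, qpz_natCast_eq_mul hq2 hd3,
    qpz_natCast_eq_mul hq2 hd4,
    pow_right_comm q 2 k, pow_right_comm q 3 k, pow_mul', pow_mul', pow_add, seqA, ratioDen]
  simp only [div_eq_mul_inv, mul_inv]
  ring
end
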